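/- arXiv:1506.05058 — 5 statements merged into one kernel-verified Lean document; each statement's English description precedes it below -/
import Mathlib

section
/- The function H(ξ) = ((m+1)/2 · ξ²)^{1/(m+1)} satisfies, for all ξ > 0 and any real m > 1, the differential equation (H^m H')' + (m+1)/2 · ξ H' = 1 + H, i.e. it is an exact solution of the self-similar ODE with the upper sign. -/
/-!
Write `H(ξ) = u^(1/(m+1))` with `u = (m+1)/2 · ξ²`. Since `u` is homogeneous of degree two,
`ξ H' = 2H/(m+1)`. Hence the convective term `(m+1)/2 · ξ H'` equals `H`, and the flux
`H^m H' = 2 H^(m+1)/((m+1) ξ) = 2u/((m+1) ξ) = ξ` has derivative `1`.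
-/

open Real Filter Topology

theorem hasDerivAt_rpow_const_mul_sq {c x : ℝ} (a : ℝ) (hc : 0 < c) (hx : 0 < x) :
    HasDerivAt (fun y => (c * y ^ 2) ^ a) (2 * a * (c * x ^ 2) ^ a / x) x := by
  have hu : 0 < c * x ^ 2 := by positivity
  convert ((hasDerivAt_pow 2 x).const_mul c).rpow_const (p := a) (Or.inl hu.ne') using 1
  rw [rpow_sub hu, rpow_one]
  field_simp
  ring

noncomputable def selfSimilarProfile (m x : ℝ) : ℝ :=
  ((m + 1) / 2 * x ^ 2) ^ (1 / (m + 1))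

section

variable {m x : ℝ}

theorem hasDerivAt_selfSimilarProfile (hm : 0 < m + 1) (hx : 0 < x) :
    HasDerivAt (selfSimilarProfile m) (2 / (m + 1) * selfSimilarProfile m x / x) x := by
  have h := hasDerivAt_rpow_const_mul_sq (1 / (m + 1)) (by positivity : 0 < (m + 1) / 2) hx
  refine h.congr_deriv ?_
  rw [selfSimilarProfile]
  ring

theorem mul_deriv_selfSimilarProfile (hm : 0 < m + 1) (hx : 0 < x) :
    (m + 1) / 2 * x * deriv (selfSimilarProfile m) x = selfSimilarProfile m x := by
  rw [(hasDerivAt_selfSimilarProfile hm hx).deriv]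
  field_simp

theorem selfSimilarProfile_rpow_succ (hm : 0 < m + 1) :
    selfSimilarProfile m x ^ (m + 1) = (m + 1) / 2 * x ^ 2 := by
  rw [selfSimilarProfile, one_div, rpow_inv_rpow (by positivity) hm.ne']

theorem selfSimilarProfile_rpow_mul_deriv (hm : 0 < m + 1) (hx : 0 < x) :
    selfSimilarProfile m x ^ m * deriv (selfSimilarProfile m) x = x := by
  have hS : 0 < selfSimilarProfile m x := by unfold selfSimilarProfile; positivity
  calc selfSimilarProfile m x ^ m * deriv (selfSimilarProfile m) x
      = 2 / (m + 1) * selfSimilarProfile m x ^ (m + 1) / x := by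
        rw [(hasDerivAt_selfSimilarProfile hm hx).deriv, rpow_add_one hS.ne']
        ring
    _ = x := by
        rw [selfSimilarProfile_rpow_succ hm]
        field_simp

theorem deriv_selfSimilarProfile_flux (hm : 0 < m + 1) (hx : 0 < x) :
    deriv (fun y => selfSimilarProfile m y ^ m * deriv (selfSimilarProfile m) y) x = 1 := by
  have hflux :
      (fun y => selfSimilarProfile m y ^ m * deriv (selfSimilarProfile m) y) =ᶠ[𝓝 x] id := by
    filter_upwards [eventually_gt_nhds hx] with y hy
    exact selfSimilarProfile_rpow_mul_deriv hm hy
  rw [hflux.deriv_eq, deriv_id]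

end

/-- The function `H(ξ) = ((m+1)/2 · ξ²)^(1/(m+1))` is an exact solution of the
self-similar ODE with the upper sign: `(H^m H')' + ((m+1)/2) ξ H' = 1 + H` for `ξ > 0`. -/
theorem exact_solution_upper_sign (m : ℝ) (hm : 1 < m) (H : ℝ → ℝ)
    (hH : ∀ x : ℝ, H x = ((m + 1) / 2 * x ^ 2) ^ (1 / (m + 1))) :
    ∀ ξ : ℝ, 0 < ξ →
      deriv (fun x => H x ^ m * deriv H x) ξ + (m + 1) / 2 * ξ * deriv H ξ = 1 + H ξ := by
  intro ξ hξ
  have hm' : 0 < m + 1 := by linarith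
  obtain rfl : H = selfSimilarProfile m := funext hH
  rw [deriv_selfSimilarProfile_flux hm' hξ, mul_deriv_selfSimilarProfile hm' hξ]
end

section
/- The function H(ξ) = ((m+1)/2 · ξ²)^{1/(m+1)} satisfies, for all ξ > 0 and any real m > 1, the differential equation (H^m H')' − (m+1)/2 · ξ H' = 1 − H, i.e. it is an exact solution of the self-similar ODE with the lower sign. -/
open Real Filter Topology

/-!
On `ξ > 0` the profile is the power law `H = k ξ^p` with `p = 2/(m+1)` and `k^(m+1) = (m+1)/2`.
Since `p (m+1) = 2` and `k^(m+1) p = 1`, the flux `H^m H'` is exactly `ξ`, so `(H^m H')' = 1`;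
and by Euler's relation `ξ H' = p H`, the transport term `((m+1)/2) ξ H'` is exactly `H`.
-/

section PowerLaw

variable {k p x : ℝ}

theorem hasDerivAt_const_mul_rpow (k : ℝ) (hx : 0 < x) :
    HasDerivAt (fun y => k * y ^ p) (k * p * x ^ (p - 1)) x := by
  simpa only [mul_assoc] using (hasDerivAt_rpow_const (p := p) (Or.inl hx.ne')).const_mul k

theorem deriv_eq_of_eq_const_mul_rpow_of_pos {H : ℝ → ℝ} (hH : ∀ y, 0 < y → H y = k * y ^ p)
    (hx : 0 < x) : deriv H x = k * p * x ^ (p - 1) := by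
  have hloc : H =ᶠ[𝓝 x] fun y => k * y ^ p := (eventually_gt_nhds hx).mono hH
  rw [hloc.deriv_eq, (hasDerivAt_const_mul_rpow k hx).deriv]

theorem const_mul_rpow_flux (m : ℝ) (hk : 0 < k) (hx : 0 < x) :
    (k * x ^ p) ^ m * (k * p * x ^ (p - 1)) = k ^ (m + 1) * p * x ^ (p * (m + 1) - 1) := by
  rw [mul_rpow hk.le (rpow_nonneg hx.le p), ← rpow_mul hx.le, rpow_add_one hk.ne',
    show p * (m + 1) - 1 = p * m + (p - 1) by ring, rpow_add hx]
  ring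

theorem mul_const_mul_rpow_sub_one (hx : 0 < x) :
    x * (k * p * x ^ (p - 1)) = p * (k * x ^ p) := by
  rw [rpow_sub_one hx.ne']
  field_simp

end PowerLaw

theorem mul_sq_rpow {c x : ℝ} (hc : 0 ≤ c) (a : ℝ) :
    (c * x ^ 2) ^ a = c ^ a * |x| ^ (2 * a) := by
  rw [mul_rpow hc (sq_nonneg x), ← sq_abs, ← rpow_natCast, ← rpow_mul (abs_nonneg x)]
  norm_num

/-- The function `H(ξ) = ((m+1)/2 · ξ²)^(1/(m+1))` is an exact solution of the
self-similar ODE with the lower sign: `(H^m H')' − ((m+1)/2) ξ H' = 1 − H` for `ξ > 0`. -/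
theorem exact_solution_lower_sign (m : ℝ) (hm : 1 < m) (H : ℝ → ℝ)
    (hH : ∀ x : ℝ, H x = ((m + 1) / 2 * x ^ 2) ^ (1 / (m + 1))) :
    ∀ ξ : ℝ, 0 < ξ →
      deriv (fun x => H x ^ m * deriv H x) ξ - (m + 1) / 2 * ξ * deriv H ξ = 1 - H ξ := by
  intro ξ hξ
  set k := ((m + 1) / 2) ^ (1 / (m + 1))
  set p := 2 * (1 / (m + 1))
  have hm₁ : 0 < m + 1 := by linarith
  have hk : 0 < k := by positivity
  have hp : p * (m + 1) = 2 := by simp only [p]; field_simp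
  have hkp : k ^ (m + 1) * p = 1 := by
    rw [← rpow_mul (by positivity), one_div_mul_cancel hm₁.ne', rpow_one]
    linear_combination hp / 2
  have hH_pos : ∀ x, 0 < x → H x = k * x ^ p := fun x hx => by
    rw [hH, mul_sq_rpow (by positivity), abs_of_pos hx]
  clear_value k p
  have hH' := fun x (hx : 0 < x) => deriv_eq_of_eq_const_mul_rpow_of_pos hH_pos hx
  have hflux : (fun x => H x ^ m * deriv H x) =ᶠ[𝓝 ξ] id := by
    filter_upwards [eventually_gt_nhds hξ] with x hx
    rw [hH_pos x hx, hH' x hx, const_mul_rpow_flux m hk hx, hkp, hp]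
    norm_num
  rw [hflux.deriv_eq, deriv_id, mul_assoc, hH' ξ hξ, mul_const_mul_rpow_sub_one hξ, ← hH_pos ξ hξ]
  linear_combination (-H ξ / 2) * hp
end

section
/- Let m > 1 and let (ξ,u,w) be a C¹ solution of ξ' = u^m, u' = w, w' = u^m(1+u) − ((m+1)/2) ξ w on an interval, with u(τ) > 0 for all τ. If w(τ₀) = 0 at some interior time τ₀, then w'(τ₀) > 0. Consequently, if w > 0 on some initial subinterval, then w can never vanish later: w(τ) > 0 for all τ in the interval after that subinterval. -/
/-! At a zero of `w` the equation reduces to `w' = u^m (1 + u) > 0`, so `w` can only cross zero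
upwards. The first point after a positive stretch where `w ≤ 0` would be a zero approached from
above, forcing `w' ≤ 0` there. -/

open Real Set Filter Topology

theorem eventually_neg_nhdsLT_of_hasDerivAt_pos {f : ℝ → ℝ} {f' x : ℝ} (hf : HasDerivAt f f' x)
    (hf' : 0 < f') (hx : f x = 0) : ∀ᶠ t in 𝓝[<] x, f t < 0 := by
  have hsign := eventually_nhdsWithin_sign_eq_of_deriv_pos (hf.deriv ▸ hf') hx
  filter_upwards [nhdsWithin_le_nhds hsign, self_mem_nhdsWithin] with t hst htx
  rw [sign_neg (sub_neg.mpr htx), sign_eq_neg_one_iff] at hst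
  exact hst

theorem pos_of_pos_on_Ioo_of_hasDerivAt {f : ℝ → ℝ} {f' s x : ℝ} (hsx : s < x)
    (hf : HasDerivAt f f' x) (hzero : f x = 0 → 0 < f') (hpos : ∀ t ∈ Ioo s x, 0 < f t) :
    0 < f x := by
  have hleft : ∀ᶠ t in 𝓝[<] x, 0 < f t :=
    eventually_of_mem (Ioo_mem_nhdsLT hsx) hpos
  have hnonneg : 0 ≤ f x :=
    ge_of_tendsto hf.continuousAt.continuousWithinAt (hleft.mono fun _ ht => ht.le)
  refine hnonneg.lt_of_ne fun hx => ?_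
  obtain ⟨t, ht_pos, ht_neg⟩ :=
    (hleft.and (eventually_neg_nhdsLT_of_hasDerivAt_pos hf (hzero hx.symm) hx.symm)).exists
  exact (ht_pos.trans ht_neg).false

theorem pos_on_Ico_of_pos_on_Ioo_of_deriv_pos_at_zeros {f f' : ℝ → ℝ} {a b c : ℝ}
    (hf : ∀ t ∈ Ioo a b, HasDerivAt f (f' t) t) (hzero : ∀ t ∈ Ioo a b, f t = 0 → 0 < f' t)
    (hac : a < c) (hpos : ∀ t ∈ Ioo a c, 0 < f t) : ∀ τ ∈ Ico c b, 0 < f τ := by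
  intro τ hτ
  by_contra! hτ_nonpos
  obtain ⟨s, has, hsc⟩ := exists_between hac
  have hsub : Icc s τ ⊆ Ioo a b := Icc_subset_Ioo has hτ.2
  set S := {t ∈ Icc s τ | f t ≤ 0}
  have hS_closed : IsClosed S :=
    (HasDerivAt.continuousOn fun t ht => hf t (hsub ht)).preimage_isClosed_of_isClosed
      isClosed_Icc isClosed_Iic
  obtain ⟨x, ⟨⟨hsx, hxτ⟩, hx_nonpos⟩, hx_least⟩ :=
    (isCompact_Icc.of_isClosed_subset hS_closed (sep_subset _ _)).exists_isLeast
      ⟨τ, ⟨hsc.le.trans hτ.1, le_rfl⟩, hτ_nonpos⟩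
  have hsx : s < x :=
    hsx.lt_of_ne fun h => (hpos s ⟨has, hsc⟩).not_ge (h ▸ hx_nonpos)
  have hpos_left : ∀ t ∈ Ioo s x, 0 < f t := fun t ht => by
    by_contra! ht_nonpos
    exact ht.2.not_ge (hx_least ⟨⟨ht.1.le, ht.2.le.trans hxτ⟩, ht_nonpos⟩)
  have hx := hsub ⟨hsx.le, hxτ⟩
  exact hx_nonpos.not_gt (pos_of_pos_on_Ioo_of_hasDerivAt hsx (hf x hx) (hzero x hx) hpos_left)

theorem w_cannot_vanish_general (m a b : ℝ) (ξ u w : ℝ → ℝ)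
    (hu_pos : ∀ τ ∈ Ioo a b, 0 < u τ)
    (hw : ∀ τ ∈ Ioo a b, HasDerivAt w (u τ ^ m * (1 + u τ) - (m + 1) / 2 * ξ τ * w τ) τ) :
    (∀ τ₀ ∈ Ioo a b, w τ₀ = 0 →
        0 < u τ₀ ^ m * (1 + u τ₀) - (m + 1) / 2 * ξ τ₀ * w τ₀) ∧
    (∀ c, a < c → c < b → (∀ τ ∈ Ioo a c, 0 < w τ) → ∀ τ ∈ Ico c b, 0 < w τ) := by
  have hzero : ∀ τ₀ ∈ Ioo a b, w τ₀ = 0 →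
      0 < u τ₀ ^ m * (1 + u τ₀) - (m + 1) / 2 * ξ τ₀ * w τ₀ := by
    intro τ₀ hτ₀ hw₀
    have hu₀ := hu_pos τ₀ hτ₀
    rw [hw₀, mul_zero, sub_zero]
    positivity
  exact ⟨hzero, fun c hac _ hpos =>
    pos_on_Ico_of_pos_on_Ioo_of_deriv_pos_at_zeros hw hzero hac hpos⟩

/-- For a C¹ solution of `ξ' = u^m, u' = w, w' = u^m(1+u) − ((m+1)/2)ξw` on an open
interval with `u > 0`: if `w` vanishes at an interior time then `w' > 0` there; consequently
if `w > 0` on an initial subinterval then `w > 0` at all later times in the interval. -/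
theorem w_cannot_vanish (m a b : ℝ) (hm : 1 < m) (ξ u w : ℝ → ℝ)
    (hu_pos : ∀ τ ∈ Ioo a b, 0 < u τ)
    (hξ : ∀ τ ∈ Ioo a b, HasDerivAt ξ (u τ ^ m) τ)
    (hu : ∀ τ ∈ Ioo a b, HasDerivAt u (w τ) τ)
    (hw : ∀ τ ∈ Ioo a b, HasDerivAt w (u τ ^ m * (1 + u τ) - (m + 1) / 2 * ξ τ * w τ) τ) :
    (∀ τ₀ ∈ Ioo a b, w τ₀ = 0 →
        0 < u τ₀ ^ m * (1 + u τ₀) - (m + 1) / 2 * ξ τ₀ * w τ₀) ∧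
    (∀ c, a < c → c < b → (∀ τ ∈ Ioo a c, 0 < w τ) → ∀ τ ∈ Ico c b, 0 < w τ) :=
  w_cannot_vanish_general m a b ξ u w hu_pos hw
end

section
/- Let m > 1 and b > 0. Define on s ∈ (−1/b, ∞): x(s) = √(2/(m+1)), y(s) = (b/(1+sb))·√((m+1)/2), z(s) = b/(1+sb). Then (x,y,z) solves the system x' = y − ((m+1)/2) x z, y' = −z y, z' = y(1+y) − ((m+1)/2) x z − ((m+3)/2) z². -/
open Real

/-- The explicit solution `x(s) = √(2/(m+1))`, `y(s) = √((m+1)/2)·b/(1+sb)`,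
`z(s) = b/(1+sb)` of the far-field system (upper sign) on `s ∈ (−1/b, ∞)`. -/
theorem exact_far_field_solution (m b : ℝ) (hm : 1 < m) (hb : 0 < b)
    (x y z : ℝ → ℝ)
    (hx : ∀ s : ℝ, x s = Real.sqrt (2 / (m + 1)))
    (hy : ∀ s : ℝ, y s = b / (1 + s * b) * Real.sqrt ((m + 1) / 2))
    (hz : ∀ s : ℝ, z s = b / (1 + s * b)) :
    ∀ s : ℝ, -1 / b < s →
      HasDerivAt x (y s - (m + 1) / 2 * x s * z s) s ∧
      HasDerivAt y (-(z s * y s)) s ∧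
      HasDerivAt z (y s * (1 + y s) - (m + 1) / 2 * x s * z s - (m + 3) / 2 * z s ^ 2) s := by
  have hx' : x = fun _ => Real.sqrt (2 / (m + 1)) := funext hx
  have hy' : y = fun s => b / (1 + s * b) * Real.sqrt ((m + 1) / 2) := funext hy
  have hz' : z = fun s => b / (1 + s * b) := funext hz
  subst hx' hy' hz'
  intro s hs
  have hm1 : (0:ℝ) < m + 1 := by linarith
  have hw : 0 < 1 + s * b := by
    have : -1 < s * b := by
      have := (div_lt_iff₀ hb).mp hs
      linarith
    linarith
  set a := Real.sqrt (2 / (m + 1)) with ha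
  set c := Real.sqrt ((m + 1) / 2) with hc
  have hac : a * c = 1 := by
    rw [ha, hc, ← Real.sqrt_mul (by positivity)]
    have : 2 / (m + 1) * ((m + 1) / 2) = 1 := by field_simp
    rw [this, Real.sqrt_one]
  have hc2 : c ^ 2 = (m + 1) / 2 := by
    rw [hc, sq, Real.mul_self_sqrt (by positivity)]
  have hkey : (m + 1) / 2 * a = c := by
    have : (m + 1) / 2 * a = c ^ 2 * a := by rw [hc2]
    rw [this, sq]
    linear_combination c * hac
  have h1 : HasDerivAt (fun t : ℝ => 1 + t * b) b s := by
    simpa using ((hasDerivAt_id s).mul_const b).const_add 1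
  have hzd : HasDerivAt (fun t : ℝ => b / (1 + t * b)) (-(b / (1 + s * b)) ^ 2) s := by
    have := (hasDerivAt_const s b).fun_div h1 (ne_of_gt hw)
    refine this.congr_deriv ?_
    field_simp
    ring
  refine ⟨?_, ?_, ?_⟩
  · have h0 : HasDerivAt (fun _ : ℝ => a) 0 s := hasDerivAt_const s a
    convert h0 using 1
    simp only
    linear_combination (-(b / (1 + s * b))) * hkey
  · have := hzd.mul_const c
    refine this.congr_deriv ?_
    ring
  · convert hzd using 1
    simp only
    linear_combination (b / (1 + s * b))^2 * hc2 + (-(b / (1 + s * b))) * hkey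
end

section
/- Let m > 1 and a > 0. Define on τ ∈ (−∞, 1/a): ξ(τ) = (2^m(m+1)/(m−1)^{m+1})^{1/(m−1)} (a/(1−τa))^{(m+1)/(m−1)}, u(τ) = (2(m+1)/(m−1)²)^{1/(m−1)} (a/(1−τa))^{2/(m−1)}, w(τ) = ξ(τ). Then (ξ,u,w) solves ξ' = u^m, u' = w, w' = u^m(1+u) − ((m+1)/2) ξ w, and ξ(τ) → 0 as τ → −∞. -/
open Real Filter

/-! With `t = a / (1 - τ a)`, which solves `t' = t²`, put `k = 2 / (m - 1)` and
`c = (2 (m + 1) / (m - 1)²)^(1/(m-1))`. Then `u = c t^k` and `ξ = w = k c t^(k+1)`, so every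
term of the system is a multiple of a power of `t`; the exponents match because `(m - 1) k = 2`,
and the coefficients because `c^(m-1) = k (k + 1)`. The constraint `u^(m+1) = (m+1)/2 · ξ w`
makes the last equation reduce to the first. As `τ → -∞`, `t → 0⁺`, hence `ξ → 0`. -/

lemma hasDerivAt_div_one_sub_mul {a τ : ℝ} (hτ : 1 - τ * a ≠ 0) :
    HasDerivAt (fun s => a / (1 - s * a)) ((a / (1 - τ * a)) ^ 2) τ := by
  have hden : HasDerivAt (fun s : ℝ => 1 - s * a) (-a) τ := by
    simpa using ((hasDerivAt_id τ).mul_const a).const_sub 1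
  refine ((hasDerivAt_const τ a).div hden hτ).congr_deriv ?_
  field_simp; ring

lemma hasDerivAt_const_mul_div_one_sub_mul_rpow {a τ : ℝ} (C r : ℝ) (ha : a ≠ 0)
    (hτ : 1 - τ * a ≠ 0) :
    HasDerivAt (fun s => C * (a / (1 - s * a)) ^ r) (C * r * (a / (1 - τ * a)) ^ (r + 1)) τ := by
  have ht : a / (1 - τ * a) ≠ 0 := div_ne_zero ha hτ
  refine (((hasDerivAt_div_one_sub_mul hτ).rpow_const (p := r) (Or.inl ht)).const_mul C
    ).congr_deriv ?_
  rw [show r + 1 = r - 1 + (2 : ℕ) by push_cast; ring, rpow_add_natCast ht]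
  ring

lemma tendsto_div_one_sub_mul_atBot {a : ℝ} (ha : 0 < a) :
    Tendsto (fun τ => a / (1 - τ * a)) atBot (nhds 0) := by
  refine tendsto_const_nhds.div_atTop ?_
  have : Tendsto (fun τ : ℝ => -(τ * a)) atBot atTop :=
    tendsto_neg_atBot_atTop.comp (tendsto_id.atBot_mul_const ha)
  simpa [sub_eq_add_neg] using tendsto_atTop_add_const_left atBot 1 this

section PowerProfile

variable {m k c t : ℝ}

lemma rpow_of_power_profile (hc : 0 < c) (ht : 0 < t) (hk : (m - 1) * k = 2)
    (hcm : c ^ (m - 1) = k * (k + 1)) :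
    (c * t ^ k) ^ m = k * c * (k + 1) * t ^ (k + 2) := by
  rw [mul_rpow hc.le (rpow_nonneg ht.le k), ← rpow_mul ht.le,
    show k * m = k + 2 by linarith, show m = m - 1 + 1 by ring, rpow_add_one hc.ne', hcm]
  ring

lemma rpow_succ_of_power_profile (hc : 0 < c) (ht : 0 < t) (hk : (m - 1) * k = 2)
    (hcm : c ^ (m - 1) = k * (k + 1)) :
    (c * t ^ k) ^ m * (c * t ^ k) = (m + 1) / 2 * (k * c * t ^ (k + 1)) ^ 2 := by
  have hsq : (t ^ (k + 1)) ^ 2 = t ^ (k + 2) * t ^ k := by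
    rw [← rpow_natCast, ← rpow_mul ht.le, ← rpow_add ht]; congr 1; push_cast; ring
  have hcoef : (m + 1) / 2 * k = k + 1 := by linarith
  rw [rpow_of_power_profile hc ht hk hcm, mul_pow, hsq]
  linear_combination (-(c ^ 2 * k * t ^ (k + 2) * t ^ k)) * hcoef

end PowerProfile

section NearFieldConstants

variable {m : ℝ}

lemma nearField_u_coeff_rpow_sub_one (hm : 1 < m) :
    ((2 * (m + 1) / (m - 1) ^ 2) ^ (1 / (m - 1))) ^ (m - 1) =
      2 / (m - 1) * (2 / (m - 1) + 1) := by
  have hm1 : m - 1 ≠ 0 := by linarith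
  rw [one_div, rpow_inv_rpow (by positivity) hm1]
  field_simp
  ring

lemma nearField_xi_coeff_eq (hm : 1 < m) :
    (2 ^ m * (m + 1) / (m - 1) ^ (m + 1)) ^ (1 / (m - 1)) =
      2 / (m - 1) * (2 * (m + 1) / (m - 1) ^ 2) ^ (1 / (m - 1)) := by
  have hm1 : 0 < m - 1 := by linarith
  have hsplit : 2 ^ m * (m + 1) / (m - 1) ^ (m + 1) =
      (2 / (m - 1)) ^ (m - 1) * (2 * (m + 1) / (m - 1) ^ 2) := by
    rw [div_rpow zero_le_two hm1.le, show m + 1 = m - 1 + (2 : ℕ) by push_cast; ring,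
      rpow_add_natCast hm1.ne']
    nth_rw 1 [show m = m - 1 + 1 by ring]
    rw [rpow_add_one two_ne_zero]
    field_simp
  rw [hsplit, mul_rpow (by positivity) (by positivity), one_div,
    rpow_rpow_inv (by positivity) hm1.ne']

end NearFieldConstants

/-- The explicit solution of the near-field system (upper sign) on `τ ∈ (−∞, 1/a)`:
`ξ(τ) = (2^m(m+1)/(m−1)^{m+1})^{1/(m−1)} (a/(1−τa))^{(m+1)/(m−1)}`,
`u(τ) = (2(m+1)/(m−1)²)^{1/(m−1)} (a/(1−τa))^{2/(m−1)}`, `w = ξ`,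
and `ξ(τ) → 0` as `τ → −∞`. -/
theorem exact_near_field_solution (m a : ℝ) (hm : 1 < m) (ha : 0 < a)
    (ξ u w : ℝ → ℝ)
    (hξdef : ∀ τ : ℝ, ξ τ =
      (2 ^ m * (m + 1) / (m - 1) ^ (m + 1)) ^ (1 / (m - 1)) *
        (a / (1 - τ * a)) ^ ((m + 1) / (m - 1)))
    (hudef : ∀ τ : ℝ, u τ =
      (2 * (m + 1) / (m - 1) ^ 2) ^ (1 / (m - 1)) * (a / (1 - τ * a)) ^ (2 / (m - 1)))
    (hwdef : ∀ τ : ℝ, w τ = ξ τ) :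
    (∀ τ : ℝ, τ < 1 / a →
      HasDerivAt ξ (u τ ^ m) τ ∧
      HasDerivAt u (w τ) τ ∧
      HasDerivAt w (u τ ^ m * (1 + u τ) - (m + 1) / 2 * ξ τ * w τ) τ) ∧
    Tendsto ξ atBot (nhds 0) := by
  have hm1 : 0 < m - 1 := by linarith
  set k := 2 / (m - 1) with hk_def
  set c := (2 * (m + 1) / (m - 1) ^ 2) ^ (1 / (m - 1))
  have hk : (m - 1) * k = 2 := by rw [hk_def]; field_simp
  have hc : 0 < c := by positivity
  have hξτ (τ : ℝ) : ξ τ = k * c * (a / (1 - τ * a)) ^ (k + 1) := by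
    rw [hξdef, nearField_xi_coeff_eq hm,
      show (m + 1) / (m - 1) = k + 1 by rw [hk_def]; field_simp; ring]
  have hξ : ξ = fun τ => k * c * (a / (1 - τ * a)) ^ (k + 1) := funext hξτ
  have hu : u = fun τ => c * (a / (1 - τ * a)) ^ k := funext hudef
  refine ⟨fun τ hτ => ?_, ?_⟩
  · have hτa : 0 < 1 - τ * a := by rw [lt_div_iff₀ ha] at hτ; linarith
    have ht : 0 < a / (1 - τ * a) := div_pos ha hτa
    have hdξ : HasDerivAt ξ (u τ ^ m) τ := by
      rw [hξ, hudef, rpow_of_power_profile hc ht hk (nearField_u_coeff_rpow_sub_one hm)]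
      convert hasDerivAt_const_mul_div_one_sub_mul_rpow (k * c) (k + 1) ha.ne' hτa.ne' using 2
      rw [add_assoc, one_add_one_eq_two]
    have hdu : HasDerivAt u (w τ) τ := by
      rw [hu, hwdef, hξτ]
      exact (hasDerivAt_const_mul_div_one_sub_mul_rpow c k ha.ne' hτa.ne').congr_deriv (by ring)
    have hflux : u τ ^ m * (1 + u τ) - (m + 1) / 2 * ξ τ * w τ = u τ ^ m := by
      rw [hwdef, hudef, hξτ]
      linear_combination rpow_succ_of_power_profile hc ht hk (nearField_u_coeff_rpow_sub_one hm)
    refine ⟨hdξ, hdu, ?_⟩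
    rw [hflux, funext hwdef]
    exact hdξ
  · have hlim := ((tendsto_div_one_sub_mul_atBot ha).rpow_const
      (Or.inr (by positivity : (0 : ℝ) ≤ k + 1))).const_mul (k * c)
    rwa [zero_rpow (by positivity), mul_zero, ← hξ] at hlim
end
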